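/- Existence of a Pareto-ranked splitting from a Pareto-dominating experiment with contained support: Let σ be an experiment. If there exists an experiment σ̂ such that u_s(σ̂, τ*) > u_s(σ, τ*), u_r(σ̂, τ*) > u_r(σ, τ*), and for every ω ∈ Ω the support of σ̂(·|ω) is contained in the support of σ(·|ω), then there exists λ ∈ (0,1) and an experiment σ̲ such that (σ̂, σ̲, λ) is a Pareto-ranked splitting of σ, i.e., λσ̂ + (1−λ)σ̲ = σ and u_s(σ̂, τ*) > u_s(σ̲, τ*), u_r(σ̂, τ*) > u_r(σ̲, τ*). -/

import Mathlib

open Finset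

/-- A stochastic kernel from `X` to `Y`: each row `k x` is a probability vector on `Y`.
An experiment is a kernel from states `Ω` to messages; a receiver strategy is a kernel
from messages to actions `A`. -/
def IsKernel {X Y : Type*} [Fintype Y] (k : X → Y → ℝ) : Prop :=
  (∀ x y, 0 ≤ k x y) ∧ ∀ x, ∑ y, k x y = 1

/-- A probability vector on a finite type. -/
def IsProb {Θ : Type*} [Fintype Θ] (μ : Θ → ℝ) : Prop :=
  (∀ θ, 0 ≤ μ θ) ∧ ∑ θ, μ θ = 1

/-- The obedient strategy `τ*`: take the recommended action with probability one. -/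
noncomputable def tauStar {A : Type*} [DecidableEq A] : A → A → ℝ :=
  fun m a => if a = m then (1 : ℝ) else 0

/-- Expected payoff `u_i(σ, τ) = ∑_{ω,m,a} p(ω) σ(m|ω) τ(a|m) u_i(a,ω)`. -/
noncomputable def expPayoff {Ω M A : Type*} [Fintype Ω] [Fintype M] [Fintype A]
    (p : Ω → ℝ) (u : A → Ω → ℝ) (σ : Ω → M → ℝ) (τ : M → A → ℝ) : ℝ :=
  ∑ ω, ∑ m, ∑ a, p ω * σ ω m * τ m a * u a ω

/-- Obedience of a single (unambiguous) canonical experiment: `τ*` is a best reply. -/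
def Obedient {Ω A : Type*} [Fintype Ω] [Fintype A] [DecidableEq A]
    (p : Ω → ℝ) (ur : A → Ω → ℝ) (σ : Ω → A → ℝ) : Prop :=
  ∀ τ : A → A → ℝ, IsKernel τ → expPayoff p ur σ τ ≤ expPayoff p ur σ tauStar

/-- Obedience of an ambiguous experiment `(σ, μ)` for a smooth-ambiguity receiver with
index `φr`:  `τ*` maximizes `τ ↦ U_r(σ, μ, τ) = φr⁻¹(∑_θ μ_θ φr(u_r(σ_θ, τ)))`; since `φr`
is strictly increasing this is equivalent to `τ*` maximizing `τ ↦ ∑_θ μ_θ φr(u_r(σ_θ, τ))`. -/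
def AmbObedient {Ω A Θ : Type*} [Fintype Ω] [Fintype A] [DecidableEq A] [Fintype Θ]
    (φr : ℝ → ℝ) (p : Ω → ℝ) (ur : A → Ω → ℝ) (σ : Θ → Ω → A → ℝ) (μ : Θ → ℝ) : Prop :=
  ∀ τ : A → A → ℝ, IsKernel τ →
    ∑ θ, μ θ * φr (expPayoff p ur (σ θ) τ) ≤ ∑ θ, μ θ * φr (expPayoff p ur (σ θ) tauStar)

/-- A smooth ambiguity index: strictly increasing, concave, differentiable. -/
def SmoothIndex (φ : ℝ → ℝ) : Prop :=
  StrictMono φ ∧ ConcaveOn ℝ Set.univ φ ∧ Differentiable ℝ φ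

/-- Two experiments are (strictly) Pareto ranked: under obedience, sender and receiver
strictly rank them the same way. -/
def ParetoRanked {Ω A : Type*} [Fintype Ω] [Fintype A] [DecidableEq A]
    (p : Ω → ℝ) (us ur : A → Ω → ℝ) (σ σ' : Ω → A → ℝ) : Prop :=
  (expPayoff p us σ' tauStar < expPayoff p us σ tauStar ∧
      expPayoff p ur σ' tauStar < expPayoff p ur σ tauStar) ∨
  (expPayoff p us σ tauStar < expPayoff p us σ' tauStar ∧
      expPayoff p ur σ tauStar < expPayoff p ur σ' tauStar)

/-- Two experiments are weakly Pareto ranked. -/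
def WeaklyParetoRanked {Ω A : Type*} [Fintype Ω] [Fintype A] [DecidableEq A]
    (p : Ω → ℝ) (us ur : A → Ω → ℝ) (σ σ' : Ω → A → ℝ) : Prop :=
  (expPayoff p us σ' tauStar ≤ expPayoff p us σ tauStar ∧
      expPayoff p ur σ' tauStar ≤ expPayoff p ur σ tauStar) ∨
  (expPayoff p us σ tauStar ≤ expPayoff p us σ' tauStar ∧
      expPayoff p ur σ tauStar ≤ expPayoff p ur σ' tauStar)

/-- Pointwise convex combination of two experiments. -/
noncomputable def mixExp {Ω A : Type*} (lam : ℝ) (σ1 σ2 : Ω → A → ℝ) : Ω → A → ℝ :=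
  fun ω a => lam * σ1 ω a + (1 - lam) * σ2 ω a

/-- `(σbar, σlo, lam)` is a Pareto-ranked splitting of the experiment `σ`. -/
def ParetoRankedSplitting {Ω A : Type*} [Fintype Ω] [Fintype A] [DecidableEq A]
    (p : Ω → ℝ) (us ur : A → Ω → ℝ) (σbar σlo : Ω → A → ℝ) (lam : ℝ) (σ : Ω → A → ℝ) : Prop :=
  IsKernel σbar ∧ IsKernel σlo ∧ lam ∈ Set.Ioo (0 : ℝ) 1 ∧
    mixExp lam σbar σlo = σ ∧ ParetoRanked p us ur σbar σlo

/-- The `((σbar, σlo), lam)`-probability premium of a player with utility `u` and index `φ`. -/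
noncomputable def probPremium {Ω A : Type*} [Fintype Ω] [Fintype A] [DecidableEq A]
    (p : Ω → ℝ) (u : A → Ω → ℝ) (φ : ℝ → ℝ) (σbar σlo : Ω → A → ℝ) (lam : ℝ) : ℝ :=
  (φ (expPayoff p u (mixExp lam σbar σlo) tauStar) -
      lam * φ (expPayoff p u σbar tauStar) - (1 - lam) * φ (expPayoff p u σlo tauStar)) /
    (φ (expPayoff p u σbar tauStar) - φ (expPayoff p u σlo tauStar))

/-- The set of `φs`-transformed sender values attainable by obedient ambiguous experiments;
the value of the sender's problem `(P)` equals `u` iff `φs u` is the least upper bound of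
this set (since `φs` is continuous and strictly increasing). -/
def senderValues {Ω A : Type*} [Fintype Ω] [Fintype A] [DecidableEq A]
    (φs φr : ℝ → ℝ) (p : Ω → ℝ) (us ur : A → Ω → ℝ) : Set ℝ :=
  {x | ∃ (n : ℕ) (σ : Fin n → Ω → A → ℝ) (μ : Fin n → ℝ),
    (∀ j, IsKernel (σ j)) ∧ IsProb μ ∧ AmbObedient φr p ur σ μ ∧
    x = ∑ j, μ j * φs (expPayoff p us (σ j) tauStar)}

/-- The set of feasible values of the auxiliary program `(Φ*(u))`: sums
`∑_θ λ_θ Φ_u(σ_θ)` over splittings `(λ_θ, σ_θ)` of obedient experiments, where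
`Φ_u(σ) = (φs(u_s(σ,τ*)) − φs(u)) / φr'(u_r(σ,τ*))`. -/
def phiProgram {Ω A : Type*} [Fintype Ω] [Fintype A] [DecidableEq A]
    (φs φr : ℝ → ℝ) (p : Ω → ℝ) (us ur : A → Ω → ℝ) (u : ℝ) : Set ℝ :=
  {x | ∃ (n : ℕ) (σ : Fin n → Ω → A → ℝ) (lam : Fin n → ℝ),
    (∀ j, IsKernel (σ j)) ∧ IsProb lam ∧
    Obedient p ur (fun ω a => ∑ j, lam j * σ j ω a) ∧
    x = ∑ j, lam j * ((φs (expPayoff p us (σ j) tauStar) - φs u) /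
      deriv φr (expPayoff p ur (σ j) tauStar))}

/-!
Shrink `σhat` by a factor `lam ∈ (0,1)` small enough that `lam • σhat ≤ σ` entrywise
(possible by the support condition and finiteness), and let `σlo` be the normalised remainder
`(σ - lam • σhat) / (1 - lam)`. Payoffs under a fixed strategy are linear in the experiment, so
`u(σ) = lam u(σhat) + (1 - lam) u(σlo)`; as `u(σ) < u(σhat)`, also `u(σlo) < u(σhat)`.
-/

theorem exists_mem_Ioo_mul_le_of_pos_imp_pos {ι : Type*} [Finite ι] {x y : ι → ℝ}
    (hy : ∀ i, 0 ≤ y i) (hxy : ∀ i, 0 < x i → 0 < y i) :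
    ∃ c ∈ Set.Ioo (0 : ℝ) 1, ∀ i, c * x i ≤ y i := by
  have hsmall : ∀ i, ∀ᶠ c in nhdsWithin (0 : ℝ) (Set.Ioi 0), c * x i ≤ y i := by
    intro i
    rcases (hy i).lt_or_eq with hyi | hyi
    · have hlim : Filter.Tendsto (fun c : ℝ => c * x i) (nhds 0) (nhds 0) :=
        (continuous_mul_const (x i)).tendsto' 0 0 (zero_mul _)
      exact nhdsWithin_le_nhds ((hlim.eventually (gt_mem_nhds hyi)).mono fun _ h => h.le)
    · have hxi : x i ≤ 0 := not_lt.mp fun hxi => (hxy i hxi).ne' hyi.symm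
      filter_upwards [self_mem_nhdsWithin] with c hc
      rw [← hyi]
      exact mul_nonpos_of_nonneg_of_nonpos (le_of_lt hc) hxi
  have hlt_one : ∀ᶠ c in nhdsWithin (0 : ℝ) (Set.Ioi 0), c < 1 :=
    nhdsWithin_le_nhds (gt_mem_nhds one_pos)
  obtain ⟨c, hc0, hc1, hc⟩ :=
    (eventually_mem_nhdsWithin.and (hlt_one.and (Filter.eventually_all.mpr hsmall))).exists
  exact ⟨c, ⟨hc0, hc1⟩, hc⟩

section Splitting

variable {Ω A : Type*}

theorem expPayoff_mixExp [Fintype Ω] [Fintype A] (p : Ω → ℝ) (u : A → Ω → ℝ) (lam : ℝ)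
    (σ1 σ2 : Ω → A → ℝ) (τ : A → A → ℝ) :
    expPayoff p u (mixExp lam σ1 σ2) τ =
      lam * expPayoff p u σ1 τ + (1 - lam) * expPayoff p u σ2 τ := by
  simp only [expPayoff, mixExp, Finset.mul_sum, ← Finset.sum_add_distrib]
  refine Finset.sum_congr rfl fun ω _ => Finset.sum_congr rfl fun m _ =>
    Finset.sum_congr rfl fun a _ => ?_
  ring

noncomputable def residualExp (lam : ℝ) (σhat σ : Ω → A → ℝ) : Ω → A → ℝ :=
  fun ω a => (σ ω a - lam * σhat ω a) / (1 - lam)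

theorem mixExp_residualExp {lam : ℝ} (hlam : lam ≠ 1) (σhat σ : Ω → A → ℝ) :
    mixExp lam σhat (residualExp lam σhat σ) = σ := by
  have h : 1 - lam ≠ 0 := sub_ne_zero.mpr hlam.symm
  funext ω a
  simp only [mixExp, residualExp]
  field_simp
  ring

theorem isKernel_residualExp [Fintype A] {lam : ℝ} {σhat σ : Ω → A → ℝ}
    (hσ : IsKernel σ) (hσhat : IsKernel σhat) (hlam : lam < 1)
    (hle : ∀ ω a, lam * σhat ω a ≤ σ ω a) : IsKernel (residualExp lam σhat σ) := by
  have h : 0 < 1 - lam := sub_pos.mpr hlam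
  refine ⟨fun ω a => div_nonneg (sub_nonneg.mpr (hle ω a)) h.le, fun ω => ?_⟩
  simp only [residualExp, ← Finset.sum_div, Finset.sum_sub_distrib, ← Finset.mul_sum,
    hσ.2 ω, hσhat.2 ω, mul_one]
  exact div_self h.ne'

theorem expPayoff_residualExp_lt [Fintype Ω] [Fintype A] (p : Ω → ℝ) (u : A → Ω → ℝ)
    {lam : ℝ} (hlam : lam < 1) {σhat σ : Ω → A → ℝ} (τ : A → A → ℝ)
    (h : expPayoff p u σ τ < expPayoff p u σhat τ) :
    expPayoff p u (residualExp lam σhat σ) τ < expPayoff p u σhat τ := by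
  have hsplit := expPayoff_mixExp p u lam σhat (residualExp lam σhat σ) τ
  rw [mixExp_residualExp hlam.ne] at hsplit
  nlinarith

end Splitting

theorem pareto_ranked_splitting_from_dominating_experiment_general
    {Ω A : Type*} [Fintype Ω] [Fintype A] [DecidableEq A]
    (p : Ω → ℝ) (us ur : A → Ω → ℝ)
    (σ σhat : Ω → A → ℝ) (hσ : IsKernel σ) (hσhat : IsKernel σhat)
    (hus : expPayoff p us σ tauStar < expPayoff p us σhat tauStar)
    (hur : expPayoff p ur σ tauStar < expPayoff p ur σhat tauStar)
    (hsupp : ∀ ω a, 0 < σhat ω a → 0 < σ ω a) :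
    ∃ (lam : ℝ) (σlo : Ω → A → ℝ), lam ∈ Set.Ioo (0 : ℝ) 1 ∧ IsKernel σlo ∧
      (∀ ω a, lam * σhat ω a + (1 - lam) * σlo ω a = σ ω a) ∧
      expPayoff p us σlo tauStar < expPayoff p us σhat tauStar ∧
      expPayoff p ur σlo tauStar < expPayoff p ur σhat tauStar := by
  obtain ⟨lam, hlam, hle⟩ := exists_mem_Ioo_mul_le_of_pos_imp_pos
    (x := Function.uncurry σhat) (y := Function.uncurry σ)
    (fun q => hσ.1 q.1 q.2) (fun q => hsupp q.1 q.2)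
  refine ⟨lam, residualExp lam σhat σ, hlam,
    isKernel_residualExp hσ hσhat hlam.2 fun ω a => hle (ω, a),
    fun ω a => congrFun₂ (mixExp_residualExp hlam.2.ne σhat σ) ω a,
    expPayoff_residualExp_lt p us hlam.2 tauStar hus,
    expPayoff_residualExp_lt p ur hlam.2 tauStar hur⟩

/-- Lemma A.7: if `σhat` strictly Pareto-dominates the experiment `σ`
(under obedience) and, for every `ω`, the support of `σhat(·|ω)` is contained in the
support of `σ(·|ω)`, then there are `lam ∈ (0,1)` and an experiment `σlo` with
`lam·σhat + (1−lam)·σlo = σ` and `σhat` strictly Pareto-dominating `σlo`, i.e.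
`(σhat, σlo, lam)` is a Pareto-ranked splitting of `σ`. -/
theorem pareto_ranked_splitting_from_dominating_experiment
    {Ω A : Type*} [Fintype Ω] [Fintype A] [DecidableEq A]
    (p : Ω → ℝ) (hp : IsProb p) (us ur : A → Ω → ℝ)
    (σ σhat : Ω → A → ℝ) (hσ : IsKernel σ) (hσhat : IsKernel σhat)
    (hus : expPayoff p us σ tauStar < expPayoff p us σhat tauStar)
    (hur : expPayoff p ur σ tauStar < expPayoff p ur σhat tauStar)
    (hsupp : ∀ ω a, 0 < σhat ω a → 0 < σ ω a) :
    ∃ (lam : ℝ) (σlo : Ω → A → ℝ), lam ∈ Set.Ioo (0 : ℝ) 1 ∧ IsKernel σlo ∧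
      (∀ ω a, lam * σhat ω a + (1 - lam) * σlo ω a = σ ω a) ∧
      expPayoff p us σlo tauStar < expPayoff p us σhat tauStar ∧
      expPayoff p ur σlo tauStar < expPayoff p ur σhat tauStar :=
  pareto_ranked_splitting_from_dominating_experiment_general p us ur σ σhat hσ hσhat hus hur hsupp
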